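/- Ambiguous-case direction of the generative-model dichotomy: if a supergroup H ⊇ G* of subgroups of S_M preserves every G*-orbit on Fin M × Fin M (i.e., every function constant on G*-orbits is constant on H-orbits), then the commutants coincide, A_{G*} = A_H, and consequently for any matrix W the Reynolds projections satisfy P_{G*}(W) = P_H(W) and every h ∈ H commutes with R = P_{G*}(W). -/

import Mathlib

/-!
Everything reduces to the entrywise description of the objects involved: `permMat σ` commutes
with `X` iff `X (σ i) (σ j) = X i j` for all `i, j`, and `reynolds G X` is the average of the
entries `X (g i) (g j)` over `g ∈ G`. The hypothesis on orbits thus says exactly that the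
commutants of `G*` and `H` agree. Since `reynolds H` fixes that common commutant, which contains
`reynolds G* W`, and `reynolds H ∘ reynolds G* = reynolds H` for `G* ≤ H`, the two Reynolds
operators agree.
-/

open scoped Matrix

/-- Permutation matrix of `σ` over `ℂ`. -/
def permMat {M : ℕ} (σ : Equiv.Perm (Fin M)) : Matrix (Fin M) (Fin M) ℂ :=
  Matrix.of fun i j => if σ i = j then 1 else 0

/-- Reynolds operator of a subgroup `G ⊆ S_M`. -/
noncomputable def reynolds {M : ℕ} (G : Subgroup (Equiv.Perm (Fin M)))
    (X : Matrix (Fin M) (Fin M) ℂ) : Matrix (Fin M) (Fin M) ℂ :=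
  letI : Fintype G := Fintype.ofFinite G
  ((Nat.card G : ℂ)⁻¹) • ∑ g : G, permMat (g : Equiv.Perm (Fin M)) * X *
    (permMat (g : Equiv.Perm (Fin M)))ᵀ

section PermMat

variable {M : ℕ} (σ : Equiv.Perm (Fin M)) (X : Matrix (Fin M) (Fin M) ℂ)

theorem permMat_eq_permMatrix : permMat σ = σ.permMatrix ℂ := by
  ext i j
  simp [permMat, PEquiv.toMatrix_apply]

theorem permMat_mul : permMat σ * X = X.submatrix σ id := by
  rw [permMat_eq_permMatrix, PEquiv.toMatrix_toPEquiv_mul]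

theorem mul_permMat : X * permMat σ = X.submatrix id σ.symm := by
  rw [permMat_eq_permMatrix, PEquiv.mul_toMatrix_toPEquiv]

theorem permMat_mul_mul_transpose : permMat σ * X * (permMat σ)ᵀ = X.submatrix σ σ := by
  rw [permMat_eq_permMatrix, Matrix.transpose_permMatrix, ← permMat_eq_permMatrix,
    ← permMat_eq_permMatrix, permMat_mul, mul_permMat]
  rfl

theorem permMat_mul_eq_mul_permMat_iff :
    permMat σ * X = X * permMat σ ↔ ∀ i j, X (σ i) (σ j) = X i j := by
  rw [permMat_mul, mul_permMat]
  constructor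
  · intro h i j
    simpa using congr_fun₂ h i (σ j)
  · intro h
    ext i j
    simpa using h i (σ.symm j)

end PermMat

section Reynolds

variable {M : ℕ} (G : Subgroup (Equiv.Perm (Fin M))) (X : Matrix (Fin M) (Fin M) ℂ)

theorem reynolds_apply [Fintype G] (i j : Fin M) :
    reynolds G X i j = (Fintype.card G : ℂ)⁻¹ * ∑ g : G, X (g • i) (g • j) := by
  simp only [reynolds, permMat_mul_mul_transpose, Matrix.smul_apply, Matrix.sum_apply,
    Matrix.submatrix_apply, smul_eq_mul, Nat.card_eq_fintype_card, Subgroup.smul_def,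
    Equiv.Perm.smul_def]
  congr
  exact Subsingleton.elim _ _

theorem reynolds_apply_perm {σ : Equiv.Perm (Fin M)} (hσ : σ ∈ G) (i j : Fin M) :
    reynolds G X (σ i) (σ j) = reynolds G X i j := by
  classical
  rw [reynolds_apply, reynolds_apply]
  congr 1
  exact Fintype.sum_equiv (Equiv.mulRight ⟨σ, hσ⟩) _ _ fun g => by
    simp [Subgroup.smul_def, Equiv.Perm.smul_def, Equiv.Perm.mul_apply]

theorem permMat_commute_reynolds {σ : Equiv.Perm (Fin M)} (hσ : σ ∈ G) :
    permMat σ * reynolds G X = reynolds G X * permMat σ :=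
  (permMat_mul_eq_mul_permMat_iff σ _).2 (reynolds_apply_perm G X hσ)

theorem reynolds_eq_self (hX : ∀ g ∈ G, ∀ i j, X (g i) (g j) = X i j) : reynolds G X = X := by
  classical
  ext i j
  rw [reynolds_apply]
  have hX' (g : G) : X (g • i) (g • j) = X i j := hX g g.2 i j
  simp only [hX', Finset.sum_const, Finset.card_univ, nsmul_eq_mul]
  rw [inv_mul_cancel_left₀ (by simp [Fintype.card_ne_zero])]

theorem reynolds_reynolds_of_le {H : Subgroup (Equiv.Perm (Fin M))} (hGH : G ≤ H) :
    reynolds H (reynolds G X) = reynolds H X := by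
  classical
  ext i j
  have reindex (g : G) :
      ∑ h : H, X (g • h • i) (g • h • j) = ∑ h : H, X (h • i) (h • j) :=
    Fintype.sum_equiv (Equiv.mulLeft ⟨g, hGH g.2⟩) _ _ fun h => by
      simp [Subgroup.smul_def, Equiv.Perm.smul_def, Equiv.Perm.mul_apply]
  calc reynolds H (reynolds G X) i j
      = (Fintype.card H : ℂ)⁻¹ * ∑ h : H, (Fintype.card G : ℂ)⁻¹ *
          ∑ g : G, X (g • h • i) (g • h • j) := by
        simp only [reynolds_apply]
    _ = (Fintype.card G : ℂ)⁻¹ * ∑ g : G, (Fintype.card H : ℂ)⁻¹ *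
          ∑ h : H, X (g • h • i) (g • h • j) := by
        simp only [Finset.mul_sum]
        rw [Finset.sum_comm]
        simp only [mul_left_comm]
    _ = (Fintype.card G : ℂ)⁻¹ * ∑ _g : G, reynolds H X i j := by
        simp only [reindex, reynolds_apply]
    _ = reynolds H X i j := by
        rw [Finset.sum_const, Finset.card_univ, nsmul_eq_mul,
          inv_mul_cancel_left₀ (by simp [Fintype.card_ne_zero])]

end Reynolds

/-- ambiguous case of the generative-model dichotomy: if `H ⊇ G*`
preserves every `G*`-orbit on pairs (every function constant on `G*`-orbits is
constant on `H`-orbits), then the commutants coincide, the Reynolds projections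
agree, and every `h ∈ H` commutes with `R = P_{G*}(W)`. -/
theorem stmt17 {M : ℕ} (Gstar H : Subgroup (Equiv.Perm (Fin M))) (hle : Gstar ≤ H)
    (horb : ∀ f : Fin M × Fin M → ℂ,
        (∀ g ∈ Gstar, ∀ p : Fin M × Fin M, f (g p.1, g p.2) = f p) →
        (∀ h ∈ H, ∀ p : Fin M × Fin M, f (h p.1, h p.2) = f p)) :
    (∀ X : Matrix (Fin M) (Fin M) ℂ,
        (∀ g ∈ Gstar, permMat g * X = X * permMat g) ↔
          (∀ h ∈ H, permMat h * X = X * permMat h)) ∧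
    (∀ W : Matrix (Fin M) (Fin M) ℂ, reynolds Gstar W = reynolds H W) ∧
    (∀ W : Matrix (Fin M) (Fin M) ℂ, ∀ h ∈ H,
        permMat h * reynolds Gstar W = reynolds Gstar W * permMat h) := by
  have commutant_eq (X : Matrix (Fin M) (Fin M) ℂ) :
      (∀ g ∈ Gstar, permMat g * X = X * permMat g) ↔
        (∀ h ∈ H, permMat h * X = X * permMat h) := by
    simp only [permMat_mul_eq_mul_permMat_iff]
    exact ⟨fun hX h hh i j =>
        horb (fun p => X p.1 p.2) (fun g hg p => hX g hg p.1 p.2) h hh (i, j),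
      fun hX g hg => hX g (hle hg)⟩
  have reynolds_mem_commutant (W : Matrix (Fin M) (Fin M) ℂ) :
      ∀ h ∈ H, permMat h * reynolds Gstar W = reynolds Gstar W * permMat h :=
    (commutant_eq _).1 fun _ hg => permMat_commute_reynolds Gstar W hg
  refine ⟨commutant_eq, fun W => ?_, reynolds_mem_commutant⟩
  calc reynolds Gstar W
      = reynolds H (reynolds Gstar W) := by
        refine (reynolds_eq_self H _ fun h hh => ?_).symm
        exact (permMat_mul_eq_mul_permMat_iff h _).1 (reynolds_mem_commutant W h hh)
    _ = reynolds H W := reynolds_reynolds_of_le Gstar W hle
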